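/- Let S, I, N, W, G > 0. The transmission delay E(δ) = G / (W·δ·log₂(1 + S/(I + W·N·δ))) is strictly decreasing in δ on (0, ∞). -/

import Mathlib

/-!
Up to the positive factor `G * log 2 / W`, the delay is the reciprocal of the rate
`R(δ) = δ * log (1 + S / (I + b * δ))` with `b = W * N`, so it suffices that `R` is strictly
increasing. With `u = I + b * δ` one finds `R'(δ) = log (1 + S / u) - (b * δ / u) * S / (u + S)`,
and `R'(δ) > 0` because `b * δ ≤ u` and `log (1 + t) > t / (1 + t)` for `t > 0`.
-/

open Real Set

lemma Real.div_one_add_lt_log_one_add {t : ℝ} (ht : 0 < t) : t / (1 + t) < log (1 + t) := by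
  refine lt_of_le_of_lt ?_ (lt_log_one_add_of_pos ht)
  rw [div_le_div_iff₀ (by positivity) (by positivity)]
  nlinarith

section Rate

variable {S I b : ℝ}

lemma hasDerivAt_mul_log_one_add_div {x : ℝ} (hS : 0 ≤ S) (hu : 0 < I + b * x) :
    HasDerivAt (fun δ : ℝ => δ * log (1 + S / (I + b * δ)))
      (log (1 + S / (I + b * x)) - b * x / (I + b * x) * (S / (I + b * x + S))) x := by
  have hlin : HasDerivAt (fun δ : ℝ => I + b * δ) b x := by
    simpa using ((hasDerivAt_id x).const_mul b).const_add I
  have harg : 1 + S / (I + b * x) ≠ 0 := by positivity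
  refine ((hasDerivAt_id x).mul
    ((((hasDerivAt_const x S).div hlin hu.ne').const_add 1).log harg)).congr_deriv ?_
  simp only [Pi.div_apply, id]
  field_simp
  ring

lemma mul_log_one_add_div_deriv_pos {x : ℝ} (hS : 0 < S) (hI : 0 < I) (hb : 0 ≤ b)
    (hx : 0 < x) :
    0 < log (1 + S / (I + b * x)) - b * x / (I + b * x) * (S / (I + b * x + S)) := by
  have hu : 0 < I + b * x := by positivity
  have hfrac : b * x / (I + b * x) ≤ 1 := (div_le_one hu).2 (by linarith)
  have hlog := div_one_add_lt_log_one_add (div_pos hS hu)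
  have hS' : S / (I + b * x) / (1 + S / (I + b * x)) = S / (I + b * x + S) := by
    field_simp
  rw [hS'] at hlog
  nlinarith [div_pos hS (add_pos hu hS)]

lemma strictMonoOn_mul_log_one_add_div (hS : 0 < S) (hI : 0 < I) (hb : 0 ≤ b) :
    StrictMonoOn (fun δ : ℝ => δ * log (1 + S / (I + b * δ))) (Ioi 0) := by
  have hderiv : ∀ x ∈ Ioi (0 : ℝ), HasDerivAt (fun δ : ℝ => δ * log (1 + S / (I + b * δ)))
      (log (1 + S / (I + b * x)) - b * x / (I + b * x) * (S / (I + b * x + S))) x :=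
    fun x hx => hasDerivAt_mul_log_one_add_div hS.le (by have : (0 : ℝ) < x := hx; positivity)
  refine strictMonoOn_of_hasDerivWithinAt_pos (convex_Ioi 0)
    (fun x hx => (hderiv x hx).continuousAt.continuousWithinAt) (fun x hx => ?_)
    (fun x hx => mul_log_one_add_div_deriv_pos hS hI hb (interior_Ioi.subset hx))
  rw [interior_Ioi] at hx ⊢
  exact (hderiv x hx).hasDerivWithinAt

lemma mul_log_one_add_div_pos {x : ℝ} (hS : 0 < S) (hI : 0 < I) (hb : 0 ≤ b) (hx : 0 < x) :
    0 < x * log (1 + S / (I + b * x)) :=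
  mul_pos hx (log_pos (lt_add_of_pos_right 1 (by positivity)))

end Rate

theorem stmt_2 (S I N W G : ℝ) (hS : 0 < S) (hI : 0 < I) (hN : 0 < N) (hW : 0 < W)
    (hG : 0 < G) :
    StrictAntiOn (fun δ : ℝ => G / (W * δ * Real.logb 2 (1 + S / (I + W * N * δ))))
      (Set.Ioi 0) := by
  have hb : 0 ≤ W * N := by positivity
  have hc : 0 < W / log 2 := div_pos hW (log_pos one_lt_two)
  have hrate (δ : ℝ) : W * δ * logb 2 (1 + S / (I + W * N * δ))
      = W / log 2 * (δ * log (1 + S / (I + W * N * δ))) := by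
    rw [logb]; ring
  intro x hx y hy hxy
  simp only [hrate]
  exact div_lt_div_of_pos_left hG (mul_pos hc (mul_log_one_add_div_pos hS hI hb hx))
    (mul_lt_mul_of_pos_left (strictMonoOn_mul_log_one_add_div hS hI hb hx hy hxy) hc)
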